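/- For every H ∈ (0,1), c_H² ≤ 2H, where c_H := √(2H)·2^H·B(1−H, H+1/2)^{−1/2}; equivalently, 4^H ≤ B(1−H, H+1/2). Moreover, equality holds if and only if H = 1/2. -/
import Mathlib


noncomputable section

/-- The Beta function `B(a,b) = Γ(a)Γ(b)/Γ(a+b)`. -/
def betaF (a b : ℝ) : ℝ := Real.Gamma a * Real.Gamma b / Real.Gamma (a + b)

/-- The normalizing constant `c_H = √(2H)·2^H·B(1-H, H+1/2)^{-1/2}`. -/
def cH (H : ℝ) : ℝ := Real.sqrt (2 * H) * (2 : ℝ) ^ H * (betaF (1 - H) (H + 1 / 2)) ^ (-(1 / 2) : ℝ)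

open Real Set

/-- Auxiliary function: `fAux c x = log Γ(c-x) + log Γ(x+c-1/2) - x log 4`.
For `c = 1` this is `log (Γ(1-x)Γ(x+1/2)) - x log 4`, whose minimum over `(0,1)` at `x = 1/2`
is equivalent to the desired inequality `4^H ≤ B(1-H, H+1/2)`. -/
def fAux (c : ℝ) (x : ℝ) : ℝ :=
  Real.log (Real.Gamma (c - x)) + Real.log (Real.Gamma (x + c - 1/2)) - x * Real.log 4

lemma convexOn_fAux (c : ℝ) (hc : 1 ≤ c) :
    ConvexOn ℝ (Set.Ioo (-(1/2) : ℝ) 1) (fAux c) := by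
  refine ⟨convex_Ioo _ _, fun x hx y hy a b ha hb hab => ?_⟩
  obtain ⟨hx1, hx2⟩ := hx
  obtain ⟨hy1, hy2⟩ := hy
  have hcx : (0:ℝ) < c - x := by linarith
  have hcy : (0:ℝ) < c - y := by linarith
  have hdx : (0:ℝ) < x + c - 1/2 := by linarith
  have hdy : (0:ℝ) < y + c - 1/2 := by linarith
  have h1 := Real.convexOn_log_Gamma.2 (Set.mem_Ioi.2 hcx) (Set.mem_Ioi.2 hcy) ha hb hab
  have h2 := Real.convexOn_log_Gamma.2 (Set.mem_Ioi.2 hdx) (Set.mem_Ioi.2 hdy) ha hb hab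
  simp only [Function.comp_apply, smul_eq_mul] at h1 h2 ⊢
  have e1 : a * (c - x) + b * (c - y) = c - (a * x + b * y) := by linear_combination c * hab
  have e2 : a * (x + c - 1/2) + b * (y + c - 1/2) = (a * x + b * y) + c - 1/2 := by
    linear_combination (c - 1/2) * hab
  rw [e1] at h1
  rw [e2] at h2
  unfold fAux
  nlinarith [h1, h2]

lemma hasDerivAt_fAux_one : HasDerivAt (fAux 1) 0 (1/2) := by
  have hπ : (0:ℝ) < Real.sqrt π := Real.sqrt_pos.2 Real.pi_pos
  have hin1 : HasDerivAt (fun x : ℝ => 1 - x) (-1) (1/2) := by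
    simpa using (hasDerivAt_id (1/2 : ℝ)).const_sub 1
  have hin2 : HasDerivAt (fun x : ℝ => x + 1 - 1/2) (1) (1/2) := by
    have := (hasDerivAt_id (1/2 : ℝ)).add_const (1 - 1/2 : ℝ)
    simpa [add_sub_assoc] using this
  have hg1 : HasDerivAt (fun x : ℝ => Real.Gamma (1 - x))
      (-Real.sqrt π * (Real.eulerMascheroniConstant + 2 * Real.log 2) * (-1)) (1/2) := by
    have h := Real.hasDerivAt_Gamma_one_half
    have h' : HasDerivAt Real.Gamma
        (-Real.sqrt π * (Real.eulerMascheroniConstant + 2 * Real.log 2)) (1 - 1/2 : ℝ) := by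
      norm_num at h ⊢; exact h
    exact HasDerivAt.comp (h := fun x : ℝ => 1 - x) (h₂ := Real.Gamma) (1/2 : ℝ) h' hin1
  have hg2 : HasDerivAt (fun x : ℝ => Real.Gamma (x + 1 - 1/2))
      ((-Real.eulerMascheroniConstant) * 1) (1/2) := by
    have h' : HasDerivAt Real.Gamma (-Real.eulerMascheroniConstant) ((1:ℝ)/2 + 1 - 1/2) := by
      norm_num; exact Real.hasDerivAt_Gamma_one
    exact HasDerivAt.comp (h := fun x : ℝ => x + 1 - 1/2) (h₂ := Real.Gamma) (1/2 : ℝ) h' hin2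
  have hΓhalf : Real.Gamma (1 - 1/2 : ℝ) = Real.sqrt π := by
    norm_num [Real.Gamma_one_half_eq]
  have hΓone : Real.Gamma ((1:ℝ)/2 + 1 - 1/2) = 1 := by
    norm_num [Real.Gamma_one]
  have hl1 := hg1.log (by rw [hΓhalf]; positivity)
  have hl2 := hg2.log (by rw [hΓone]; norm_num)
  have hl3 : HasDerivAt (fun x : ℝ => x * Real.log 4) (Real.log 4) (1/2) := by
    simpa using (hasDerivAt_id (1/2 : ℝ)).mul_const (Real.log 4)
  have htot := (hl1.add hl2).sub hl3
  have hval : -Real.sqrt π * (Real.eulerMascheroniConstant + 2 * Real.log 2) * (-1)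
        / Real.Gamma (1 - 1/2 : ℝ)
      + (-Real.eulerMascheroniConstant) * 1 / Real.Gamma ((1:ℝ)/2 + 1 - 1/2)
      - Real.log 4 = 0 := by
    rw [hΓhalf, hΓone]
    have h4 : Real.log 4 = 2 * Real.log 2 := by
      rw [show (4:ℝ) = 2 ^ 2 by norm_num, Real.log_pow]; push_cast; ring
    field_simp
    linarith [h4]
  have hfin : HasDerivAt (fAux 1)
      (-Real.sqrt π * (Real.eulerMascheroniConstant + 2 * Real.log 2) * (-1)
          / Real.Gamma (1 - 1/2 : ℝ)
        + (-Real.eulerMascheroniConstant) * 1 / Real.Gamma ((1:ℝ)/2 + 1 - 1/2)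
        - Real.log 4) (1/2) := htot
  rwa [hval] at hfin

lemma half_mem : (1/2 : ℝ) ∈ Set.Ioo (-(1/2) : ℝ) 1 := by norm_num

lemma fAux_min {y : ℝ} (hy : y ∈ Set.Ioo (-(1/2) : ℝ) 1) : fAux 1 (1/2) ≤ fAux 1 y := by
  rcases lt_trichotomy y (1/2 : ℝ) with h | h | h
  · have := (convexOn_fAux 1 le_rfl).slope_le_of_hasDerivAt hy half_mem h hasDerivAt_fAux_one
    rw [slope_def_field, div_le_iff₀ (by linarith : (0:ℝ) < 1/2 - y)] at this
    linarith
  · rw [h]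
  · have := (convexOn_fAux 1 le_rfl).le_slope_of_hasDerivAt half_mem hy h hasDerivAt_fAux_one
    rw [slope_def_field, le_div_iff₀ (by linarith : (0:ℝ) < y - 1/2)] at this
    linarith

lemma log_midpoint {a b : ℝ} (ha : 0 < a) (hb : 0 < b) (hab : a ≠ b) :
    (Real.log a + Real.log b) / 2 < Real.log ((a + b) / 2) := by
  have := strictConcaveOn_log_Ioi.2 (Set.mem_Ioi.2 ha) (Set.mem_Ioi.2 hb) hab
    (by norm_num : (0:ℝ) < 1/2) (by norm_num : (0:ℝ) < 1/2) (by norm_num)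
  simp only [smul_eq_mul] at this
  have e : (1/2:ℝ) * a + (1/2:ℝ) * b = (a+b)/2 := by ring
  rw [e] at this
  linarith

lemma fAux_two_eq {x : ℝ} (hx : x ∈ Set.Ioo (0:ℝ) 1) :
    fAux 2 x = fAux 1 x + Real.log (1 - x) + Real.log (x + 1/2) := by
  obtain ⟨hx1, hx2⟩ := hx
  have h1 : (0:ℝ) < 1 - x := by linarith
  have h2 : (0:ℝ) < x + 1/2 := by linarith
  have e1 : (2:ℝ) - x = (1 - x) + 1 := by ring
  have e2 : x + 2 - 1/2 = (x + 1/2) + 1 := by ring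
  unfold fAux
  rw [e1, e2, Real.Gamma_add_one h1.ne', Real.Gamma_add_one h2.ne',
    Real.log_mul h1.ne' (Real.Gamma_pos_of_pos h1).ne',
    Real.log_mul h2.ne' (Real.Gamma_pos_of_pos h2).ne']
  ring

lemma fAux_eq_min_iff {H : ℝ} (hH : H ∈ Set.Ioo (0:ℝ) 1) (heq : fAux 1 H = fAux 1 (1/2)) :
    H = 1/2 := by
  by_contra hne
  obtain ⟨hH1, hH2⟩ := hH
  set w : ℝ := (1/2 + H) / 2 with hw
  have hHmem : H ∈ Set.Ioo (-(1/2) : ℝ) 1 := ⟨by linarith, hH2⟩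
  have hwIoo : w ∈ Set.Ioo (0:ℝ) 1 := ⟨by norm_num [hw]; linarith, by norm_num [hw]; linarith⟩
  have hwmem : w ∈ Set.Ioo (-(1/2) : ℝ) 1 := ⟨by linarith [hwIoo.1], hwIoo.2⟩
  have hcomb : w = (1/2 : ℝ) • (1/2 : ℝ) + (1/2 : ℝ) • H := by
    simp [hw, smul_eq_mul]; ring
  have h1 := (convexOn_fAux 1 le_rfl).2 half_mem hHmem
    (by norm_num : (0:ℝ) ≤ 1/2) (by norm_num : (0:ℝ) ≤ 1/2) (by norm_num)
  rw [← hcomb] at h1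
  have h1' : fAux 1 w ≤ (fAux 1 (1/2) + fAux 1 H) / 2 := by
    simp only [smul_eq_mul] at h1; linarith
  have hmin := fAux_min hwmem
  have hfw : fAux 1 w = fAux 1 (1/2) := by rw [heq] at h1'; linarith
  have h2 := (convexOn_fAux 2 (by norm_num)).2 half_mem hHmem
    (by norm_num : (0:ℝ) ≤ 1/2) (by norm_num : (0:ℝ) ≤ 1/2) (by norm_num)
  rw [← hcomb] at h2
  simp only [smul_eq_mul] at h2
  have hhalf : (1/2 : ℝ) ∈ Set.Ioo (0:ℝ) 1 := by norm_num
  rw [fAux_two_eq hwIoo, fAux_two_eq hhalf, fAux_two_eq ⟨hH1, hH2⟩, hfw, heq] at h2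
  have hs1 : (Real.log (1 - 1/2) + Real.log (1 - H)) / 2 < Real.log (1 - w) := by
    have := log_midpoint (by norm_num : (0:ℝ) < 1 - 1/2) (by linarith : (0:ℝ) < 1 - H)
      (by intro hc; apply hne; linarith)
    have e : ((1 - 1/2) + (1 - H)) / 2 = 1 - w := by rw [hw]; ring
    rwa [e] at this
  have hs2 : (Real.log (1/2 + 1/2) + Real.log (H + 1/2)) / 2 < Real.log (w + 1/2) := by
    have := log_midpoint (by norm_num : (0:ℝ) < 1/2 + 1/2) (by linarith : (0:ℝ) < H + 1/2)
      (by intro hc; apply hne; linarith)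
    have e : ((1/2 + 1/2) + (H + 1/2)) / 2 = w + 1/2 := by rw [hw]; ring
    rwa [e] at this
  linarith

/-- The central inequality: `4^H ≤ B(1-H, H+1/2)` with equality iff `H = 1/2`. -/
lemma four_rpow_le_betaF {H : ℝ} (hH : H ∈ Set.Ioo (0:ℝ) 1) :
    (4:ℝ) ^ H ≤ betaF (1 - H) (H + 1/2) ∧
      (betaF (1 - H) (H + 1/2) = (4:ℝ) ^ H ↔ H = 1/2) := by
  obtain ⟨hH1, hH2⟩ := hH
  have ha : (0:ℝ) < 1 - H := by linarith
  have hb : (0:ℝ) < H + 1/2 := by linarith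
  have hsum : (1 - H) + (H + 1/2) = (3/2 : ℝ) := by ring
  have hΓ32 : Real.Gamma (3/2 : ℝ) = Real.sqrt π / 2 := by
    rw [show (3/2 : ℝ) = 1/2 + 1 by norm_num,
      Real.Gamma_add_one (by norm_num : (1/2 : ℝ) ≠ 0), Real.Gamma_one_half_eq]
    ring
  have hπ : (0:ℝ) < Real.sqrt π := Real.sqrt_pos.2 Real.pi_pos
  have hΓ32pos : (0:ℝ) < Real.Gamma (3/2 : ℝ) := by rw [hΓ32]; positivity
  have hBpos : 0 < betaF (1 - H) (H + 1/2) := by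
    unfold betaF
    rw [hsum]
    exact div_pos (mul_pos (Real.Gamma_pos_of_pos ha) (Real.Gamma_pos_of_pos hb)) hΓ32pos
  have h4pos : (0:ℝ) < (4:ℝ) ^ H := Real.rpow_pos_of_pos (by norm_num) H
  -- log of the beta value
  have hlogB : Real.log (betaF (1 - H) (H + 1/2)) =
      Real.log (Real.Gamma (1 - H)) + Real.log (Real.Gamma (H + 1/2))
        - Real.log (Real.Gamma (3/2 : ℝ)) := by
    unfold betaF
    rw [hsum, Real.log_div (mul_pos (Real.Gamma_pos_of_pos ha)
        (Real.Gamma_pos_of_pos hb)).ne' hΓ32pos.ne',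
      Real.log_mul (Real.Gamma_pos_of_pos ha).ne' (Real.Gamma_pos_of_pos hb).ne']
  have hlog4H : Real.log ((4:ℝ) ^ H) = H * Real.log 4 := Real.log_rpow (by norm_num) H
  have h4 : Real.log 4 = 2 * Real.log 2 := by
    rw [show (4:ℝ) = 2 ^ 2 by norm_num, Real.log_pow]; push_cast; ring
  -- fAux 1 (1/2) = log Γ(3/2)
  have hfhalf : fAux 1 (1/2) = Real.log (Real.Gamma (3/2 : ℝ)) := by
    unfold fAux
    rw [show (1:ℝ) - 1/2 = 1/2 by norm_num, show (1:ℝ)/2 + 1 - 1/2 = 1 by norm_num,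
      Real.Gamma_one, Real.log_one, Real.Gamma_one_half_eq, hΓ32,
      Real.log_div hπ.ne' (by norm_num : (2:ℝ) ≠ 0), h4]
    ring
  have hfH : fAux 1 H = Real.log (Real.Gamma (1 - H)) + Real.log (Real.Gamma (H + 1/2))
      - H * Real.log 4 := by
    unfold fAux
    rw [show H + 1 - 1/2 = H + 1/2 by ring]
  have hkey : Real.log (betaF (1 - H) (H + 1/2)) - Real.log ((4:ℝ) ^ H)
      = fAux 1 H - fAux 1 (1/2) := by
    rw [hlogB, hlog4H, hfhalf, hfH]; ring
  have hmin := fAux_min (y := H) ⟨by linarith, hH2⟩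
  constructor
  · rw [← Real.log_le_log_iff h4pos hBpos]
    linarith
  · constructor
    · intro heqB
      refine fAux_eq_min_iff ⟨hH1, hH2⟩ ?_
      have : Real.log (betaF (1 - H) (H + 1/2)) = Real.log ((4:ℝ) ^ H) := by rw [heqB]
      linarith [hkey, this]
    · intro h
      subst h
      unfold betaF
      rw [hsum, show (1:ℝ) - 1/2 = 1/2 by norm_num, show (1:ℝ)/2 + 1/2 = 1 by norm_num,
        Real.Gamma_one, Real.Gamma_one_half_eq, hΓ32,
        show ((4:ℝ) ^ ((1:ℝ)/2)) = 2 by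
          rw [show (4:ℝ) = 2 ^ (2:ℕ) by norm_num, ← Real.rpow_natCast 2 2,
            ← Real.rpow_mul (by norm_num : (0:ℝ) ≤ 2)]
          norm_num]
      field_simp

/-- For every `H ∈ (0,1)`, `c_H² ≤ 2H`, equivalently `4^H ≤ B(1-H, H+1/2)`, with equality
if and only if `H = 1/2`. -/
theorem cH_sq_le_two_H (H : ℝ) (hH : H ∈ Set.Ioo (0 : ℝ) 1) :
    (cH H) ^ 2 ≤ 2 * H ∧
    (4 : ℝ) ^ H ≤ betaF (1 - H) (H + 1 / 2) ∧
    ((cH H) ^ 2 = 2 * H ↔ H = 1 / 2) := by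
  obtain ⟨hle, hiff⟩ := four_rpow_le_betaF hH
  obtain ⟨hH1, hH2⟩ := hH
  have ha : (0:ℝ) < 1 - H := by linarith
  have hb : (0:ℝ) < H + 1/2 := by linarith
  have hsum : (1 - H) + (H + 1/2) = (3/2 : ℝ) := by ring
  have hΓ32pos : (0:ℝ) < Real.Gamma (3/2 : ℝ) :=
    Real.Gamma_pos_of_pos (by norm_num)
  have hBpos : 0 < betaF (1 - H) (H + 1/2) := by
    unfold betaF
    rw [hsum]
    exact div_pos (mul_pos (Real.Gamma_pos_of_pos ha) (Real.Gamma_pos_of_pos hb)) hΓ32pos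
  set B := betaF (1 - H) (H + 1/2) with hBdef
  have h4pos : (0:ℝ) < (4:ℝ) ^ H := Real.rpow_pos_of_pos (by norm_num) H
  -- compute cH H ^ 2
  have hsq : (cH H) ^ 2 = 2 * H * ((4:ℝ) ^ H / B) := by
    unfold cH
    rw [mul_pow, mul_pow, Real.sq_sqrt (by linarith : (0:ℝ) ≤ 2 * H)]
    have e1 : ((2:ℝ) ^ H) ^ 2 = (4:ℝ) ^ H := by
      rw [← Real.rpow_natCast ((2:ℝ) ^ H) 2, ← Real.rpow_mul (by norm_num : (0:ℝ) ≤ 2),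
        show (4:ℝ) = 2 ^ (2:ℕ) by norm_num, ← Real.rpow_natCast 2 2,
        ← Real.rpow_mul (by norm_num : (0:ℝ) ≤ 2)]
      norm_num
      rw [mul_comm]
    have e2 : (B ^ (-(1/2) : ℝ)) ^ 2 = B⁻¹ := by
      rw [← Real.rpow_natCast (B ^ (-(1/2) : ℝ)) 2, ← Real.rpow_mul hBpos.le]
      norm_num [Real.rpow_neg_one]
    rw [e1, e2]
    field_simp
  have hx : (4:ℝ) ^ H / B ≤ 1 := (div_le_one hBpos).2 hle
  have h2H : (0:ℝ) < 2 * H := by linarith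
  refine ⟨?_, hle, ?_⟩
  · rw [hsq]
    nlinarith [hx, h2H]
  · constructor
    · intro h
      rw [hsq] at h
      have h2H : (0:ℝ) < 2 * H := by linarith
      have hdiv : (4:ℝ) ^ H / B = 1 :=
        mul_left_cancel₀ h2H.ne' (h.trans (mul_one (2 * H)).symm)
      have : (4:ℝ) ^ H = B := (div_eq_one_iff_eq hBpos.ne').1 hdiv
      exact hiff.1 this.symm
    · intro h
      have hBeq : B = (4:ℝ) ^ H := hiff.2 h
      rw [hsq, hBeq]
      field_simp

end
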